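/- arXiv:1701.04267 — 3 statements merged into one kernel-verified Lean document; each statement's English description precedes it below -/
import Mathlib

section
/- Let (X,d) be a complete separable metric space and μ ∈ P_X. Then a measure ϑ ∈ P_X belongs to ({μ}ᵘ)ᵘ if and only if S_ϑ¹ ⊆ S_μ¹, where for a set of measures 𝒜 ⊆ P_X the unit distance set is 𝒜ᵘ = {ν ∈ P_X | π(μ,ν) = 1 for all μ ∈ 𝒜} (with ∅ᵘ = P_X by convention). -/
open MeasureTheory Metric Set TopologicalSpace
open scoped ENNReal NNReal

/-- The (one-sided) Lévy–Prokhorov distance of two Borel probability measures. -/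
noncomputable def LPdist {X : Type*} [MetricSpace X] [MeasurableSpace X]
    (μ ν : ProbabilityMeasure X) : ℝ :=
  sInf {ε : ℝ | 0 < ε ∧ ∀ A : Set X, MeasurableSet A →
    (μ : Measure X) A ≤ (ν : Measure X) (thickening ε A) + ENNReal.ofReal ε}

/-- The s-Lévy–Prokhorov distance. -/
noncomputable def LPsdist {X : Type*} [MetricSpace X] [MeasurableSpace X]
    (s : ℝ) (μ ν : ProbabilityMeasure X) : ℝ :=
  sInf {ε : ℝ | 0 < ε ∧ ∀ A : Set X, MeasurableSet A →
    ENNReal.ofReal s * (μ : Measure X) A ≤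
      ENNReal.ofReal s * (ν : Measure X) (thickening ε A) + ENNReal.ofReal ε}

/-- The support of a Borel probability measure. -/
def mSupport {X : Type*} [MetricSpace X] [MeasurableSpace X]
    (μ : ProbabilityMeasure X) : Set X :=
  {x : X | ∀ r : ℝ, 0 < r → 0 < (μ : Measure X) (ball x r)}

/-- The Dirac measure as a probability measure. -/
noncomputable def diracPM {X : Type*} [MeasurableSpace X] (x : X) : ProbabilityMeasure X :=
  ⟨Measure.dirac x, inferInstance⟩

/-- Finitely supported probability measures: finite convex combinations of Dirac measures. -/
def IsFinitelySupported {X : Type*} [MeasurableSpace X] (μ : ProbabilityMeasure X) : Prop :=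
  ∃ (s : Finset X) (w : X → ℝ), (∀ x ∈ s, 0 < w x) ∧ (∑ x ∈ s, w x = 1) ∧
    (μ : Measure X) = ∑ x ∈ s, ENNReal.ofReal (w x) • Measure.dirac x

/-- The unit distance set of a set of probability measures. -/
def unitDistSet {X : Type*} [MetricSpace X] [MeasurableSpace X]
    (𝒜 : Set (ProbabilityMeasure X)) : Set (ProbabilityMeasure X) :=
  {ν | ∀ μ ∈ 𝒜, LPdist μ ν = 1}

/-- The witness function. -/
noncomputable def witness {X : Type*} [MetricSpace X] [MeasurableSpace X]
    (μ : ProbabilityMeasure X) (x : X) : ℝ :=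
  LPdist (diracPM x) μ

/-- The s-witness function. -/
noncomputable def switness {X : Type*} [MetricSpace X] [MeasurableSpace X]
    (s : ℝ) (μ : ProbabilityMeasure X) (x : X) : ℝ :=
  LPsdist s (diracPM x) μ

section Aux

variable {X : Type*} [MetricSpace X] [MeasurableSpace X]

lemma isClosed_mSupport (μ : ProbabilityMeasure X) : IsClosed (mSupport μ) := by
  rw [← isOpen_compl_iff, Metric.isOpen_iff]
  intro x hx
  simp only [mSupport, mem_compl_iff, mem_setOf_eq, not_forall] at hx
  push_neg at hx
  obtain ⟨r, hr, hball⟩ := hx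
  rw [nonpos_iff_eq_zero] at hball
  refine ⟨r, hr, fun y hy => ?_⟩
  simp only [mem_compl_iff, mSupport, mem_setOf_eq, not_forall]
  push_neg
  refine ⟨r - dist y x, by simpa [mem_ball] using hy, ?_⟩
  rw [nonpos_iff_eq_zero]
  refine measure_mono_null ?_ hball
  intro u hu
  have : dist u x ≤ dist u y + dist y x := dist_triangle u y x
  simp only [mem_ball] at hu ⊢
  linarith

lemma measure_compl_mSupport [SeparableSpace X] (μ : ProbabilityMeasure X) :
    (μ : Measure X) (mSupport μ)ᶜ = 0 := by
  haveI := UniformSpace.secondCountable_of_separable X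
  apply measure_null_of_locally_null
  intro x hx
  simp only [mSupport, mem_compl_iff, mem_setOf_eq, not_forall] at hx
  push_neg at hx
  obtain ⟨r, hr, hball⟩ := hx
  rw [nonpos_iff_eq_zero] at hball
  exact ⟨ball x r, nhdsWithin_le_nhds (ball_mem_nhds x hr), hball⟩

lemma measure_mSupport [SeparableSpace X] [OpensMeasurableSpace X] (μ : ProbabilityMeasure X) :
    (μ : Measure X) (mSupport μ) = 1 := by
  have h := measure_add_measure_compl (μ := (μ : Measure X)) (isClosed_mSupport μ).measurableSet
  rw [measure_compl_mSupport, add_zero, measure_univ] at h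
  exact h

lemma mSupport_diracPM [OpensMeasurableSpace X] (x : X) :
    mSupport (diracPM x) = {x} := by
  have hcoe : ((diracPM x : ProbabilityMeasure X) : Measure X) = Measure.dirac x := rfl
  ext y
  simp only [mSupport, mem_setOf_eq, hcoe, mem_singleton_iff]
  constructor
  · intro h
    by_contra hne
    have hr : 0 < dist x y := dist_pos.mpr (Ne.symm hne)
    have h2 := h (dist x y) hr
    rw [Measure.dirac_apply' _ measurableSet_ball] at h2
    have hx : x ∉ ball y (dist x y) := by simp [mem_ball]
    rw [indicator_of_notMem hx] at h2
    exact lt_irrefl _ h2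
  · rintro rfl r hr
    rw [Measure.dirac_apply' _ measurableSet_ball, indicator_of_mem (mem_ball_self hr)]
    exact one_pos

lemma LPdist_lt_one_of_close [OpensMeasurableSpace X] {μ ν : ProbabilityMeasure X}
    {z y : X} (hz : z ∈ mSupport μ) (hy : y ∈ mSupport ν) (hd : dist z y < 1) :
    LPdist μ ν < 1 := by
  set d := dist z y with hd_def
  have hd0 : 0 ≤ d := dist_nonneg
  set δ := (1 - d) / 4 with hδ_def
  have hδ : 0 < δ := by rw [hδ_def]; linarith
  have ha : 0 < (μ : Measure X) (ball z δ) := hz δ hδ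
  have hb : 0 < (ν : Measure X) (ball y δ) := hy δ hδ
  have ha' : (μ : Measure X) (ball z δ) ≠ ⊤ := measure_ne_top _ _
  have hb' : (ν : Measure X) (ball y δ) ≠ ⊤ := measure_ne_top _ _
  set a := ((μ : Measure X) (ball z δ)).toReal with ha_def
  set b := ((ν : Measure X) (ball y δ)).toReal with hb_def
  have ha0 : 0 < a := ENNReal.toReal_pos ha.ne' ha'
  have hb0 : 0 < b := ENNReal.toReal_pos hb.ne' hb'
  set η := min (min (a / 2) (b / 2)) δ with hη_def
  have hη0 : 0 < η := lt_min (lt_min (by linarith) (by linarith)) hδ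
  have hηδ : η ≤ δ := min_le_right _ _
  have hηa : ENNReal.ofReal η < (μ : Measure X) (ball z δ) := by
    calc ENNReal.ofReal η ≤ ENNReal.ofReal (a / 2) :=
          ENNReal.ofReal_le_ofReal ((min_le_left _ _).trans (min_le_left _ _))
    _ < ENNReal.ofReal a := by
          rw [ENNReal.ofReal_lt_ofReal_iff ha0]; linarith
    _ = (μ : Measure X) (ball z δ) := ENNReal.ofReal_toReal ha'
  have hηb : ENNReal.ofReal η ≤ (ν : Measure X) (ball y δ) := by
    calc ENNReal.ofReal η ≤ ENNReal.ofReal b :=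
          ENNReal.ofReal_le_ofReal (((min_le_left _ _).trans (min_le_right _ _)).trans (by linarith))
    _ = (ν : Measure X) (ball y δ) := ENNReal.ofReal_toReal hb'
  set ε := 1 - η with hε_def
  have hε1 : ε < 1 := by rw [hε_def]; linarith
  have hε0 : 0 < ε := by
    have : η ≤ δ := hηδ
    rw [hε_def, hδ_def] at *
    linarith
  have hmem : ε ∈ {ε : ℝ | 0 < ε ∧ ∀ A : Set X, MeasurableSet A →
      (μ : Measure X) A ≤ (ν : Measure X) (thickening ε A) + ENNReal.ofReal ε} := by
    refine ⟨hε0, fun A hA => ?_⟩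
    rcases le_or_gt ((μ : Measure X) A) (ENNReal.ofReal ε) with h | h
    · exact h.trans (self_le_add_left _ _)
    · have hAc : (μ : Measure X) Aᶜ ≤ ENNReal.ofReal η := by
        rw [measure_compl hA (measure_ne_top _ _), measure_univ]
        calc (1 : ℝ≥0∞) - (μ : Measure X) A ≤ 1 - ENNReal.ofReal ε := tsub_le_tsub_left h.le 1
        _ = ENNReal.ofReal η := by
            rw [show (1 : ℝ≥0∞) = ENNReal.ofReal 1 by simp,
              ← ENNReal.ofReal_sub _ hε0.le]
            congr 1
            rw [hε_def]; ring
      have hw : (μ : Measure X) (A ∩ ball z δ) ≠ 0 := by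
        intro h0
        have hsub : ball z δ ⊆ (A ∩ ball z δ) ∪ Aᶜ := by
          intro u hu
          by_cases huA : u ∈ A
          · exact Or.inl ⟨huA, hu⟩
          · exact Or.inr huA
        have : (μ : Measure X) (ball z δ) ≤ ENNReal.ofReal η := by
          calc (μ : Measure X) (ball z δ) ≤ (μ : Measure X) ((A ∩ ball z δ) ∪ Aᶜ) :=
                measure_mono hsub
          _ ≤ (μ : Measure X) (A ∩ ball z δ) + (μ : Measure X) Aᶜ := measure_union_le _ _
          _ = (μ : Measure X) Aᶜ := by rw [h0, zero_add]
          _ ≤ ENNReal.ofReal η := hAc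
        exact absurd this (not_le.mpr hηa)
      obtain ⟨w, hwA, hwb⟩ := nonempty_of_measure_ne_zero hw
      have hball : ball y δ ⊆ thickening ε A := by
        intro u hu
        rw [Metric.mem_thickening_iff]
        refine ⟨w, hwA, ?_⟩
        have h4 : dist u w ≤ dist u y + dist y z + dist z w := dist_triangle4 u y z w
        have h1 : dist u y < δ := mem_ball.mp hu
        have h2 : dist y z = d := by rw [hd_def, dist_comm]
        have h3 : dist z w < δ := by simpa [dist_comm] using mem_ball.mp hwb
        rw [hε_def]
        rw [hδ_def] at *
        linarith
      calc (μ : Measure X) A ≤ 1 := prob_le_one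
      _ = ENNReal.ofReal η + ENNReal.ofReal ε := by
          rw [← ENNReal.ofReal_add hη0.le hε0.le, hε_def]
          norm_num
      _ ≤ (ν : Measure X) (thickening ε A) + ENNReal.ofReal ε := by
          gcongr
          exact hηb.trans (measure_mono hball)
  have hle : LPdist μ ν ≤ ε := csInf_le ⟨0, fun t ht => ht.1.le⟩ hmem
  linarith

lemma LPdist_eq_one_iff [SeparableSpace X] [OpensMeasurableSpace X] (μ ν : ProbabilityMeasure X) :
    LPdist μ ν = 1 ↔ ∀ z ∈ mSupport μ, ∀ y ∈ mSupport ν, 1 ≤ dist z y := by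
  constructor
  · intro h z hz y hy
    by_contra hlt
    rw [not_le] at hlt
    have := LPdist_lt_one_of_close hz hy hlt
    linarith [h ▸ this]
  · intro H
    have h1mem : (1 : ℝ) ∈ {ε : ℝ | 0 < ε ∧ ∀ A : Set X, MeasurableSet A →
        (μ : Measure X) A ≤ (ν : Measure X) (thickening ε A) + ENNReal.ofReal ε} := by
      refine ⟨one_pos, fun A hA => ?_⟩
      calc (μ : Measure X) A ≤ 1 := prob_le_one
      _ ≤ (ν : Measure X) (thickening 1 A) + ENNReal.ofReal 1 := by simp
    refine le_antisymm (csInf_le ⟨0, fun t ht => ht.1.le⟩ h1mem) (le_csInf ⟨1, h1mem⟩ ?_)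
    rintro ε ⟨hε0, hε⟩
    by_contra hlt
    rw [not_le] at hlt
    have hth : (ν : Measure X) (thickening ε (mSupport μ)) = 0 := by
      refine measure_mono_null ?_ (measure_compl_mSupport ν)
      intro u hu
      obtain ⟨zz, hzz, hdz⟩ := Metric.mem_thickening_iff.mp hu
      intro huν
      have := H zz hzz u huν
      rw [dist_comm] at hdz
      linarith
    have := hε (mSupport μ) (isClosed_mSupport μ).measurableSet
    rw [measure_mSupport, hth, zero_add] at this
    have : (1 : ℝ≥0∞) < 1 := lt_of_le_of_lt this (ENNReal.ofReal_lt_one.mpr hlt)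
    exact absurd this (lt_irrefl _)

end Aux

/-- Characterisation of the double unit distance set: `ϑ ∈ ({μ}ᵘ)ᵘ` iff the open
1-neighbourhood of the support of `ϑ` is contained in that of the support of `μ`. -/
theorem mem_double_unitDistSet_iff {X : Type*} [MetricSpace X] [CompleteSpace X]
    [SeparableSpace X] [MeasurableSpace X] [BorelSpace X] (μ ϑ : ProbabilityMeasure X) :
    ϑ ∈ unitDistSet (unitDistSet {μ}) ↔
      thickening 1 (mSupport ϑ) ⊆ thickening 1 (mSupport μ) := by
  constructor
  · intro h x hx
    obtain ⟨y, hy, hdy⟩ := Metric.mem_thickening_iff.mp hx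
    by_contra hxμ
    have hfar : ∀ w ∈ mSupport μ, 1 ≤ dist x w := by
      intro w hw
      by_contra hlt
      exact hxμ (Metric.mem_thickening_iff.mpr ⟨w, hw, not_le.mp hlt⟩)
    have hmem : diracPM x ∈ unitDistSet {μ} := by
      intro μ' hμ'
      rw [mem_singleton_iff] at hμ'
      subst hμ'
      rw [LPdist_eq_one_iff]
      intro z hz u hu
      rw [mSupport_diracPM, mem_singleton_iff] at hu
      subst hu
      rw [dist_comm]
      exact hfar z hz
    have h1 := h (diracPM x) hmem
    rw [LPdist_eq_one_iff] at h1
    have h2 := h1 x (by rw [mSupport_diracPM]; exact mem_singleton _) y hy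
    linarith
  · intro hsub ν hν
    have hν1 := hν μ (mem_singleton _)
    rw [LPdist_eq_one_iff] at hν1 ⊢
    intro z hz y hy
    by_contra hlt
    rw [not_le] at hlt
    have hzth : z ∈ thickening 1 (mSupport ϑ) := Metric.mem_thickening_iff.mpr ⟨y, hy, hlt⟩
    obtain ⟨w, hw, hdw⟩ := Metric.mem_thickening_iff.mp (hsub hzth)
    have h3 := hν1 w hw z hz
    rw [dist_comm] at h3
    linarith
end

section
/- Let (X,‖·‖) be a separable real Banach space and φ: P_X → P_X a surjective π-isometry. Then there exists a surjective affine isometry ψ: X → X such that φ(δ_x) = δ_{ψ(x)} for every x ∈ X. -/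
/-!
In `(P_X, π)` the Dirac measures are singled out metrically: `μ` is a Dirac measure iff nothing
but `μ` lies at distance `1` from every measure at distance `1` from `μ`. For `δ_x` this holds
because the measures at distance `1` from `δ_x` are those vanishing on the open unit ball around
`x`, and a measure `μ ≠ δ_x` is at distance `< 1` from its push-forward under the radial retraction
of `X` onto the complement of that ball. Conversely, for any `μ` and any point `z` of its support,
`δ_z` lies at distance `1` from everything at distance `1` from `μ`.

A surjective π-isometry therefore maps Dirac measures onto Dirac measures, inducing a bijection
`ψ` of `X` with `min ‖ψ x - ψ y‖ 1 = min ‖x - y‖ 1`, as `π(δ_x, δ_y) = min ‖x - y‖ 1`. Chaining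
along segments upgrades this to an isometry, and Mazur–Ulam makes it affine.
-/

open MeasureTheory Metric Set TopologicalSpace

open scoped ENNReal

lemma exists_real_btwn_of_lt_one {a : ℝ≥0∞} (ha : a < 1) {s : ℝ} (hs : s < 1) :
    ∃ ε : ℝ, s < ε ∧ ε < 1 ∧ a < .ofReal ε := by
  obtain ⟨t, -, hat, ht1⟩ := ENNReal.lt_iff_exists_real_btwn.1 ha
  obtain ⟨ε, hε, hε1⟩ := exists_between (max_lt hs (ENNReal.ofReal_lt_one.1 ht1))
  exact ⟨ε, (le_max_left _ _).trans_lt hε, hε1,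
    hat.trans_le (ENNReal.ofReal_le_ofReal ((le_max_right _ _).trans hε.le))⟩

section LPdist

variable {X : Type*} [MetricSpace X] [MeasurableSpace X] {μ ν : ProbabilityMeasure X}

lemma LPdist_le_of_forall {ε : ℝ} (hε : 0 < ε)
    (h : ∀ A, MeasurableSet A → (μ : Measure X) A ≤ (ν : Measure X) (thickening ε A) + .ofReal ε) :
    LPdist μ ν ≤ ε :=
  csInf_le ⟨0, fun _ hδ ↦ hδ.1.le⟩ ⟨hε, h⟩

lemma LPdist_le_one (μ ν : ProbabilityMeasure X) : LPdist μ ν ≤ 1 :=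
  LPdist_le_of_forall one_pos fun _ _ ↦ by simpa using le_add_left prob_le_one

lemma measure_le_of_LPdist_lt {ε : ℝ} (h : LPdist μ ν < ε) {A : Set X} (hA : MeasurableSet A) :
    (μ : Measure X) A ≤ (ν : Measure X) (thickening ε A) + .ofReal ε := by
  have hne : {δ : ℝ | 0 < δ ∧ ∀ A, MeasurableSet A →
      (μ : Measure X) A ≤ (ν : Measure X) (thickening δ A) + .ofReal δ}.Nonempty :=
    ⟨1, one_pos, fun _ _ ↦ by simpa using le_add_left prob_le_one⟩
  obtain ⟨δ, ⟨-, hδ⟩, hδε⟩ := exists_lt_of_csInf_lt hne h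
  exact (hδ A hA).trans (add_le_add (measure_mono (thickening_mono hδε.le A))
    (ENNReal.ofReal_le_ofReal hδε.le))

variable [OpensMeasurableSpace X]

lemma LPdist_eq_levyProkhorovDist (μ ν : ProbabilityMeasure X) :
    LPdist μ ν = levyProkhorovDist (μ : Measure X) ν := by
  refine le_antisymm (le_of_forall_gt_imp_ge_of_dense fun ε hε ↦ ?_) ?_
  · have hε₀ : 0 < ε := ENNReal.toReal_nonneg.trans_lt hε
    have hlt : levyProkhorovEDist (μ : Measure X) ν < .ofReal ε :=
      (ENNReal.lt_ofReal_iff_toReal_lt (levyProkhorovEDist_ne_top _ _)).2 hε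
    refine LPdist_le_of_forall hε₀ fun A hA ↦ ?_
    simpa [ENNReal.toReal_ofReal hε₀.le] using left_measure_le_of_levyProkhorovEDist_lt hlt hA
  · exact levyProkhorovDist_le_of_forall_le _ _ (Real.sInf_nonneg fun _ hδ ↦ hδ.1.le)
      fun ε A hε hA ↦ measure_le_of_LPdist_lt hε hA

lemma LPdist_comm (μ ν : ProbabilityMeasure X) : LPdist μ ν = LPdist ν μ := by
  simp only [LPdist_eq_levyProkhorovDist, levyProkhorovDist_comm]

lemma LPdist_eq_zero_iff [BorelSpace X] : LPdist μ ν = 0 ↔ μ = ν := by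
  refine ⟨fun h ↦ ?_, fun h ↦ by simp [h, LPdist_eq_levyProkhorovDist, levyProkhorovDist_self]⟩
  have : dist (LevyProkhorov.ofMeasure μ) (LevyProkhorov.ofMeasure ν) = 0 := by
    rwa [LevyProkhorov.dist_probabilityMeasure_def, ← LPdist_eq_levyProkhorovDist]
  exact congrArg LevyProkhorov.toMeasure (dist_eq_zero.1 this)

end LPdist

section Dirac

variable {X : Type*} [MetricSpace X] [MeasurableSpace X] {ν : ProbabilityMeasure X} {x : X}

lemma LPdist_diracPM_le {ε : ℝ} (hε : 0 < ε)
    (h : 1 ≤ (ν : Measure X) (ball x ε) + .ofReal ε) : LPdist (diracPM x) ν ≤ ε := by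
  refine LPdist_le_of_forall hε fun A hA ↦ ?_
  by_cases hx : x ∈ A
  · calc (diracPM x : Measure X) A ≤ 1 := prob_le_one
      _ ≤ _ := h.trans (by grw [ball_subset_thickening hx ε])
  · simp [diracPM, Measure.dirac_apply' x hA, hx]

lemma mem_support_diracPM : x ∈ (diracPM x : Measure X).support :=
  (Measure.mem_support_iff_forall x).2 fun _ hU ↦ by
    simp [diracPM, Measure.dirac_apply_of_mem (mem_of_mem_nhds hU)]

variable [OpensMeasurableSpace X]

lemma diracPM_injective : Function.Injective (diracPM (X := X)) :=
  fun _ _ h ↦ injective_dirac (congrArg ProbabilityMeasure.toMeasure h)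

lemma min_le_LPdist_diracPM {r : ℝ} (h : (ν : Measure X) (ball x r) = 0) :
    min r 1 ≤ LPdist (diracPM x) ν := by
  by_contra! hlt
  obtain ⟨ε, hLε, hε⟩ := exists_between hlt
  have hεr : ε < r := hε.trans_le (min_le_left _ _)
  have hε1 : ε < 1 := hε.trans_le (min_le_right _ _)
  have hx := measure_le_of_LPdist_lt hLε (measurableSet_singleton x)
  rw [thickening_singleton, measure_mono_null (ball_subset_ball hεr.le) h, zero_add] at hx
  simp [diracPM, Measure.dirac_apply_of_mem (mem_singleton x)] at hx
  linarith

lemma LPdist_diracPM_eq_one (h : (ν : Measure X) (ball x 1) = 0) : LPdist (diracPM x) ν = 1 :=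
  (LPdist_le_one _ _).antisymm (by simpa using min_le_LPdist_diracPM h)

lemma LPdist_diracPM_diracPM (x y : X) :
    LPdist (diracPM x) (diracPM y) = min (dist x y) 1 := by
  refine le_antisymm (le_of_forall_gt_imp_ge_of_dense fun ε hε ↦ ?_) (min_le_LPdist_diracPM ?_)
  · refine LPdist_diracPM_le ((le_min dist_nonneg zero_le_one).trans_lt hε) ?_
    rcases min_lt_iff.1 hε with hxy | h1
    · simp [diracPM, Measure.dirac_apply_of_mem (mem_ball'.2 hxy)]
    · exact le_add_left (ENNReal.one_le_ofReal.2 h1.le)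
  · simp [diracPM, Measure.dirac_apply' y measurableSet_ball, dist_comm]

end Dirac

section Support

variable {X : Type*} [MetricSpace X] [MeasurableSpace X] [OpensMeasurableSpace X]
  {μ ν : ProbabilityMeasure X}

lemma measure_compl_ball_lt_one {z : X} (hz : z ∈ (μ : Measure X).support) {r : ℝ} (hr : 0 < r) :
    (μ : Measure X) (ball z r)ᶜ < 1 := by
  rw [prob_compl_eq_one_sub measurableSet_ball]
  exact ENNReal.sub_lt_self ENNReal.one_ne_top one_ne_zero
    ((Measure.mem_support_iff_forall z).1 hz _ (ball_mem_nhds z hr)).ne'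

lemma LPdist_lt_one_of_mem_support {z w : X} (hz : z ∈ (μ : Measure X).support)
    (hw : w ∈ (ν : Measure X).support) (hzw : dist z w < 1) : LPdist μ ν < 1 := by
  set r := (1 - dist z w) / 4 with hr_def
  have hr : 0 < r := by rw [hr_def]; linarith
  obtain ⟨ε, hε, hε1, hεc⟩ := exists_real_btwn_of_lt_one
    (max_lt (measure_compl_ball_lt_one hz hr) (measure_compl_ball_lt_one hw hr))
    (show dist z w + 2 * r < 1 by rw [hr_def]; linarith)
  have hε0 : 0 < ε := by linarith [dist_nonneg (x := z) (y := w)]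
  refine (LPdist_le_of_forall hε0 fun A hA ↦ ?_).trans_lt hε1
  by_cases hAz : (A ∩ ball z r).Nonempty
  · obtain ⟨a, haA, haz⟩ := hAz
    have hsub : ball w r ⊆ thickening ε A := fun y hy ↦ mem_thickening_iff.2 ⟨a, haA, by
      linarith [dist_triangle4 y w z a, mem_ball.1 hy, mem_ball'.1 haz, dist_comm z w]⟩
    calc (μ : Measure X) A ≤ 1 := prob_le_one
      _ = (ν : Measure X) (ball w r) + (ν : Measure X) (ball w r)ᶜ := by
        rw [measure_add_measure_compl measurableSet_ball, measure_univ]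
      _ ≤ _ := add_le_add (measure_mono hsub) ((le_max_right _ _).trans hεc.le)
  · have hsub : A ⊆ (ball z r)ᶜ := fun a haA haz ↦ hAz ⟨a, haA, haz⟩
    exact (measure_mono hsub).trans (((le_max_left _ _).trans hεc.le).trans le_add_self)

lemma exists_measure_closedBall_lt_one {x : X} (hμ : μ ≠ diracPM x) :
    ∃ r, 0 < r ∧ r < 1 ∧ (μ : Measure X) (closedBall x r) < 1 := by
  by_contra! h
  have hx : (μ : Measure X) {x} = 1 := by
    have hlim := tendsto_measure_cthickening_of_isClosed (μ := (μ : Measure X)) (s := {x})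
      ⟨1, one_pos, measure_ne_top _ _⟩ isClosed_singleton
    refine tendsto_nhds_unique (hlim.mono_left (nhdsWithin_le_nhds (s := Ioi 0)))
      (tendsto_const_nhds.congr' ?_)
    filter_upwards [Ioo_mem_nhdsGT one_pos] with r hr
    rw [cthickening_singleton x hr.1.le]
    exact (prob_le_one.antisymm (h r hr.1 hr.2)).symm
  refine hμ (ProbabilityMeasure.toMeasure_injective ?_)
  have hae : ∀ᵐ y ∂(μ : Measure X), y ∈ ({x} : Set X) :=
    ae_iff.2 ((prob_compl_eq_zero_iff (measurableSet_singleton x)).2 hx)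
  rw [← Measure.restrict_eq_self_of_ae_mem hae, Measure.restrict_singleton, hx, one_smul]
  rfl

lemma LPdist_map_le {T : X → X} (hT : Measurable T) {S : Set X} {ε : ℝ} (hε : 0 < ε)
    (hS : (μ : Measure X) S ≤ .ofReal ε) (hmove : ∀ y ∉ S, dist (T y) y < ε) :
    LPdist μ (μ.map hT.aemeasurable) ≤ ε := by
  refine LPdist_le_of_forall hε fun A hA ↦ ?_
  rw [ProbabilityMeasure.toMeasure_map, Measure.map_apply hT isOpen_thickening.measurableSet]
  have hsub : A ⊆ T ⁻¹' thickening ε A ∪ S := fun y hy ↦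
    or_iff_not_imp_right.2 fun hyS ↦ mem_thickening_iff.2 ⟨y, hy, hmove y hyS⟩
  exact (measure_mono hsub).trans ((measure_union_le _ _).trans (by gcongr))

variable [HereditarilyLindelofSpace X]

lemma measure_ball_eq_zero_of_LPdist_eq_one {z : X} (hz : z ∈ (μ : Measure X).support)
    (h : LPdist μ ν = 1) : (ν : Measure X) (ball z 1) = 0 := by
  by_contra hν
  obtain ⟨w, hwz, hw⟩ := Measure.nonempty_inter_support_of_pos (pos_iff_ne_zero.2 hν)
  exact (LPdist_lt_one_of_mem_support hz hw (mem_ball'.1 hwz)).ne h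

lemma mem_unitDistSet_singleton_diracPM_iff {x : X} :
    ν ∈ unitDistSet {diracPM x} ↔ (ν : Measure X) (ball x 1) = 0 := by
  show (∀ μ ∈ {diracPM x}, LPdist μ ν = 1) ↔ _
  simp only [mem_singleton_iff, forall_eq]
  exact ⟨measure_ball_eq_zero_of_LPdist_eq_one mem_support_diracPM, LPdist_diracPM_eq_one⟩

end Support

section Isometries

variable {X : Type*} [MetricSpace X] [MeasurableSpace X]
  {φ : ProbabilityMeasure X → ProbabilityMeasure X}

lemma injective_of_LPdist_eq [BorelSpace X] (hiso : ∀ μ ν, LPdist (φ μ) (φ ν) = LPdist μ ν) :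
    Function.Injective φ := fun μ ν h ↦
  LPdist_eq_zero_iff.1 (by rw [← hiso, h, LPdist_eq_zero_iff.2 rfl])

lemma image_unitDistSet_of_LPdist_eq (hsurj : Function.Surjective φ)
    (hiso : ∀ μ ν, LPdist (φ μ) (φ ν) = LPdist μ ν) (𝒜 : Set (ProbabilityMeasure X)) :
    φ '' unitDistSet 𝒜 = unitDistSet (φ '' 𝒜) := by
  refine Subset.antisymm ?_ fun ν hν ↦ ?_
  · rintro _ ⟨ν, hν, rfl⟩ _ ⟨μ, hμ, rfl⟩
    rw [hiso]; exact hν μ hμ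
  · obtain ⟨ν, rfl⟩ := hsurj ν
    exact ⟨ν, fun μ hμ ↦ hiso μ ν ▸ hν _ ⟨μ, hμ, rfl⟩, rfl⟩

end Isometries

section Normed

variable {X : Type*} [NormedAddCommGroup X] [NormedSpace ℝ X]

lemma exists_measurable_retraction_compl_ball [Nontrivial X] [MeasurableSpace X]
    [BorelSpace X] (x : X) : ∃ T : X → X, Measurable T ∧ (∀ y, T y ∉ ball x 1) ∧
      ∀ y ≠ x, dist (T y) y = max (1 - dist y x) 0 := by
  classical
  obtain ⟨v, hv⟩ := exists_ne (0 : X)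
  have hmeas : Measurable fun y : X ↦ x + (max 1 ‖y - x‖ / ‖y - x‖) • (y - x) := by fun_prop
  refine ⟨fun y ↦ if y = x then x + ‖v‖⁻¹ • v else x + (max 1 ‖y - x‖ / ‖y - x‖) • (y - x),
    Measurable.ite (measurableSet_singleton x) measurable_const hmeas, fun y ↦ ?_,
    fun y hy ↦ ?_⟩
  · rw [mem_ball, not_lt, dist_eq_norm]
    dsimp only
    split_ifs with h
    · rw [add_sub_cancel_left, norm_smul, norm_inv, norm_norm,
        inv_mul_cancel₀ (norm_ne_zero_iff.2 hv)]
    · have ht : 0 < ‖y - x‖ := norm_pos_iff.2 (sub_ne_zero.2 h)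
      rw [add_sub_cancel_left, norm_smul, Real.norm_of_nonneg (by positivity),
        div_mul_cancel₀ _ ht.ne']
      exact le_max_left _ _
  · have ht : 0 < ‖y - x‖ := norm_pos_iff.2 (sub_ne_zero.2 hy)
    have hc : 1 ≤ max 1 ‖y - x‖ / ‖y - x‖ := (one_le_div ht).2 (le_max_right _ _)
    have hTy : x + (max 1 ‖y - x‖ / ‖y - x‖) • (y - x) - y
        = (max 1 ‖y - x‖ / ‖y - x‖ - 1) • (y - x) := by
      rw [sub_smul, one_smul]; abel
    dsimp only
    rw [if_neg hy, dist_eq_norm, dist_eq_norm, hTy, norm_smul, Real.norm_of_nonneg (by linarith),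
      sub_mul, div_mul_cancel₀ _ ht.ne', one_mul, ← max_sub_sub_right, sub_self]

variable [MeasurableSpace X] [BorelSpace X] [HereditarilyLindelofSpace X]

lemma unitDistSet_unitDistSet_diracPM_subset (x : X) :
    unitDistSet (unitDistSet {diracPM x}) ⊆ {diracPM x} := by
  intro μ hμ
  by_contra hμx
  obtain ⟨r, hr0, hr1, hμr⟩ := exists_measure_closedBall_lt_one hμx
  have : Nontrivial X := by
    obtain ⟨y, hy⟩ := nonempty_compl.2 fun (h : closedBall x r = univ) ↦ by
      rw [h, measure_univ] at hμr; exact hμr.false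
    exact ⟨⟨y, x, by rintro rfl; exact hy (mem_closedBall_self hr0.le)⟩⟩
  obtain ⟨T, hT, hTball, hTdist⟩ := exists_measurable_retraction_compl_ball x
  obtain ⟨ε, hε, hε1, hμε⟩ := exists_real_btwn_of_lt_one hμr (show 1 - r < 1 by linarith)
  have hTμ : μ.map hT.aemeasurable ∈ unitDistSet {diracPM x} := by
    rw [mem_unitDistSet_singleton_diracPM_iff, ProbabilityMeasure.toMeasure_map,
      Measure.map_apply hT measurableSet_ball,
      show T ⁻¹' ball x 1 = ∅ from eq_empty_of_forall_notMem hTball, measure_empty]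
  refine (hμ _ hTμ).not_lt ?_
  rw [LPdist_comm]
  refine (LPdist_map_le hT (by linarith) hμε.le fun y hy ↦ ?_).trans_lt hε1
  rw [mem_closedBall, not_le] at hy
  rw [hTdist y (dist_pos.1 (hr0.trans hy))]
  exact max_lt (by linarith) (by linarith)

lemma unitDistSet_unitDistSet_subset_singleton_iff (μ : ProbabilityMeasure X) :
    unitDistSet (unitDistSet {μ}) ⊆ {μ} ↔ μ ∈ range diracPM := by
  refine ⟨fun h ↦ ?_, ?_⟩
  · obtain ⟨z, hz⟩ := Measure.nonempty_support (IsProbabilityMeasure.ne_zero (μ : Measure X))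
    have hz' : diracPM z ∈ unitDistSet (unitDistSet {μ}) := fun ν hν ↦ by
      rw [LPdist_comm]
      exact LPdist_diracPM_eq_one (measure_ball_eq_zero_of_LPdist_eq_one hz (hν μ rfl))
    exact ⟨z, h hz'⟩
  · rintro ⟨x, rfl⟩
    exact unitDistSet_unitDistSet_diracPM_subset x

lemma map_mem_range_diracPM_iff {φ : ProbabilityMeasure X → ProbabilityMeasure X}
    (hsurj : Function.Surjective φ)
    (hiso : ∀ μ ν, LPdist (φ μ) (φ ν) = LPdist μ ν) (μ : ProbabilityMeasure X) :
    φ μ ∈ range diracPM ↔ μ ∈ range diracPM := by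
  rw [← unitDistSet_unitDistSet_subset_singleton_iff,
    ← unitDistSet_unitDistSet_subset_singleton_iff, ← image_singleton,
    ← image_unitDistSet_of_LPdist_eq hsurj hiso, ← image_unitDistSet_of_LPdist_eq hsurj hiso,
    image_subset_image_iff (injective_of_LPdist_eq hiso)]

end Normed

section Rigidity

variable {E F : Type*} [NormedAddCommGroup E] [NormedSpace ℝ E] [NormedAddCommGroup F]
  [NormedSpace ℝ F]

lemma lipschitzWith_one_of_dist_le_of_dist_lt {Y : Type*} [PseudoMetricSpace Y] {f : E → Y}
    {δ : ℝ} (hδ : 0 < δ) (h : ∀ x y, dist x y < δ → dist (f x) (f y) ≤ dist x y) :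
    LipschitzWith 1 f := by
  refine LipschitzWith.of_dist_le_mul fun x y ↦ ?_
  rw [NNReal.coe_one, one_mul]
  obtain ⟨n, hn⟩ := exists_nat_gt (dist x y / δ)
  have hn0 : (0 : ℝ) < n := (div_nonneg dist_nonneg hδ.le).trans_lt hn
  let p : ℕ → E := fun i ↦ AffineMap.lineMap x y ((i : ℝ) / n)
  have hstep : ∀ i, dist (p i) (p (i + 1)) = dist x y / n := fun i ↦ by
    rw [dist_lineMap_lineMap, Real.dist_eq, Nat.cast_succ, ← sub_div, sub_add_cancel_left, abs_div,
      abs_neg, abs_one, abs_of_pos hn0, one_div_mul_eq_div]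
  have hsmall : dist x y / n < δ := by
    rw [div_lt_iff₀ hn0]; rwa [div_lt_iff₀ hδ, mul_comm] at hn
  calc dist (f x) (f y) = dist (f (p 0)) (f (p n)) := by simp [p, hn0.ne']
    _ ≤ ∑ i ∈ Finset.range n, dist (f (p i)) (f (p (i + 1))) :=
      dist_le_range_sum_dist (fun i ↦ f (p i)) n
    _ ≤ ∑ _i ∈ Finset.range n, dist x y / n :=
      Finset.sum_le_sum fun i _ ↦ (h _ _ (hstep i ▸ hsmall)).trans (hstep i).le
    _ = dist x y := by rw [Finset.sum_const, Finset.card_range, nsmul_eq_mul]; field_simp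

lemma isometry_of_surjective_of_min_dist_eq {f : E → F} (hf : Function.Surjective f) {δ : ℝ}
    (hδ : 0 < δ) (h : ∀ x y, min (dist (f x) (f y)) δ = min (dist x y) δ) : Isometry f := by
  have eq_of_min_eq : ∀ {a b : ℝ}, min a δ = min b δ → b < δ → a = b := fun {a b} hab hb ↦ by
    rcases le_total a δ with ha | ha
    · rwa [min_eq_left ha, min_eq_left hb.le] at hab
    · rw [min_eq_right ha, min_eq_left hb.le] at hab; linarith
  have hinj : Function.Injective f := fun x y hxy ↦
    dist_eq_zero.1 (eq_of_min_eq (by rw [← h, hxy, dist_self]) hδ)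
  set g := Function.surjInv hf
  have hfg : ∀ y, f (g y) = y := Function.surjInv_eq hf
  have hgf : ∀ x, g (f x) = x := Function.leftInverse_surjInv ⟨hinj, hf⟩
  have hf_lip := lipschitzWith_one_of_dist_le_of_dist_lt hδ fun x y hxy ↦
    (eq_of_min_eq (h x y) hxy).le
  have hg_lip := lipschitzWith_one_of_dist_le_of_dist_lt (f := g) hδ fun x y hxy ↦
    (eq_of_min_eq (by rw [← h, hfg, hfg]) hxy).le
  refine Isometry.of_dist_eq fun x y ↦ le_antisymm ?_ ?_
  · simpa using hf_lip.dist_le_mul x y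
  · simpa [hgf] using hg_lip.dist_le_mul (f x) (f y)

end Rigidity

theorem dirac_action_general {X : Type*} [NormedAddCommGroup X] [NormedSpace ℝ X]
    [SeparableSpace X] [MeasurableSpace X] [BorelSpace X]
    (φ : ProbabilityMeasure X → ProbabilityMeasure X)
    (hsurj : Function.Surjective φ)
    (hiso : ∀ μ ν : ProbabilityMeasure X, LPdist (φ μ) (φ ν) = LPdist μ ν) :
    ∃ ψ : X ≃ᵃⁱ[ℝ] X, ∀ x : X, φ (diracPM x) = diracPM (ψ x) := by
  have hdirac := map_mem_range_diracPM_iff hsurj hiso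
  choose ψ hψ using fun x ↦ (hdirac (diracPM x)).2 ⟨x, rfl⟩
  have hψ_surj : Function.Surjective ψ := fun y ↦ by
    obtain ⟨μ, hμ⟩ := hsurj (diracPM y)
    obtain ⟨x, rfl⟩ := (hdirac μ).1 ⟨y, hμ.symm⟩
    exact ⟨x, diracPM_injective ((hψ x).trans hμ)⟩
  have hψ_iso : Isometry ψ := isometry_of_surjective_of_min_dist_eq hψ_surj one_pos fun x y ↦ by
    rw [← LPdist_diracPM_diracPM, ← LPdist_diracPM_diracPM, hψ, hψ, hiso]
  let e : X ≃ᵢ X := ⟨.ofBijective ψ ⟨hψ_iso.injective, hψ_surj⟩, hψ_iso⟩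
  exact ⟨e.toRealAffineIsometryEquiv, fun x ↦ (hψ x).symm⟩

/-- Lemma 2.3: a surjective Lévy–Prokhorov isometry acts on the Dirac measures as a
surjective affine isometry of the underlying Banach space. -/
theorem dirac_action {X : Type*} [NormedAddCommGroup X] [NormedSpace ℝ X]
    [CompleteSpace X] [SeparableSpace X] [MeasurableSpace X] [BorelSpace X]
    (φ : ProbabilityMeasure X → ProbabilityMeasure X)
    (hsurj : Function.Surjective φ)
    (hiso : ∀ μ ν : ProbabilityMeasure X, LPdist (φ μ) (φ ν) = LPdist μ ν) :
    ∃ ψ : X ≃ᵃⁱ[ℝ] X, ∀ x : X, φ (diracPM x) = diracPM (ψ x) :=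
  dirac_action_general φ hsurj hiso
end

section
/- Let (X,‖·‖) be a separable real Banach space, let μ ∈ F_X with #S_μ ≤ 2, and let ν ∈ P_X. If the witness functions coincide, i.e., W_μ(x) = W_ν(x) for all x ∈ X, then μ = ν. -/
/-!
A bound `W_ν(x) ≤ t` forces `ν(B̄(x, t)) ≥ 1 - t`, and `W_ν(x) ≥ 1` forces `ν(B(x, 1)) = 0`.

Write `μ = b δ_p + a δ_q` with `a + b = 1`, `b > 0`, and let `u` be the unit vector from `p`
to `q`. Reading these bounds off `W_μ = W_ν`, the measure `ν` gives mass `≥ 1 - a` to every ball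
`B̄(p - a w, a)` with `‖w‖ = 1`, mass `≥ 1 - b` to `B̄(q + b u, b)`, and mass `0` to `B(p - u, 1)`.
For `w` in the face of the unit sphere through `u` (i.e. `‖u + w‖ = 2`) the first two balls are
disjoint, so the complement of their union is an open `ν`-null set. When the norm is not strictly
convex the balls `B̄(p - a w, a)` may share more than `p`, but every point of
`B̄(p - a u, a) \ B(p - u, 1)` other than `p` avoids one of them. By separability the union of
these open null sets is null, so `ν{p} ≥ ν(B̄(p - a u, a)) ≥ b = μ{p}`. Doing this at both atoms
gives `μ ≤ ν`, hence `μ = ν`.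
-/

open MeasureTheory Metric Set TopologicalSpace

open ENNReal Filter Topology

section Witness

variable {X : Type*} [MetricSpace X] [MeasurableSpace X] [OpensMeasurableSpace X]
  {μ ν : ProbabilityMeasure X} {x y : X} {t ε : ℝ}

/-- Only the sets containing `x` constrain `δₓ`, and among them `{x}` is the tightest. -/
theorem witness_eq_sInf (ν : ProbabilityMeasure X) (x : X) :
    witness ν x = sInf {ε | 0 < ε ∧ 1 ≤ (ν : Measure X) (ball x ε) + ENNReal.ofReal ε} := by
  refine congrArg sInf (Set.ext fun ε => and_congr_right fun _ => ⟨fun h => ?_, fun h A hA => ?_⟩)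
  · simpa [diracPM, thickening_singleton] using h {x} (measurableSet_singleton x)
  · by_cases hxA : x ∈ A
    · rw [diracPM, ProbabilityMeasure.coe_mk, Measure.dirac_apply_of_mem hxA]
      exact h.trans (by gcongr; exact ball_subset_thickening hxA ε)
    · simp [diracPM, Measure.dirac_apply' _ hA, hxA]

theorem witness_le (hε : 0 < ε) (h : 1 ≤ (ν : Measure X) (ball x ε) + ENNReal.ofReal ε) :
    witness ν x ≤ ε := by
  rw [witness_eq_sInf]
  refine csInf_le ?_ ⟨hε, h⟩
  exact ⟨0, fun _ hr => hr.1.le⟩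

theorem witness_nonneg (ν : ProbabilityMeasure X) (x : X) : 0 ≤ witness ν x := by
  rw [witness_eq_sInf]
  exact Real.sInf_nonneg fun _ hr => hr.1.le

theorem witness_le_of_forall_gt (h : ∀ ε > t, 1 ≤ (ν : Measure X) (ball x ε) + ENNReal.ofReal ε) :
    witness ν x ≤ t := by
  refine le_of_forall_gt_imp_ge_of_dense fun ε hε => ?_
  rcases lt_or_ge 0 ε with hε0 | hε0
  · exact witness_le hε0 (h ε hε)
  · simpa [ball_eq_empty.2 hε0, ENNReal.ofReal_eq_zero.2 hε0] using h ε hε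

theorem one_le_measure_ball_add_of_witness_lt (h : witness ν x < ε) :
    1 ≤ (ν : Measure X) (ball x ε) + ENNReal.ofReal ε := by
  rw [witness_eq_sInf] at h
  obtain ⟨r, ⟨-, hr⟩, hrε⟩ := exists_lt_of_csInf_lt (by exact ⟨1, one_pos, by simp⟩) h
  exact hr.trans (by gcongr)

theorem measure_ball_add_lt_one_of_lt_witness (h : ε < witness ν x) :
    (ν : Measure X) (ball x ε) + ENNReal.ofReal ε < 1 := by
  rcases le_or_gt ε 0 with hε | hε
  · simp [ball_eq_empty.2 hε, ENNReal.ofReal_eq_zero.2 hε]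
  · exact lt_of_not_ge fun h' => (witness_le hε h').not_gt h

theorem le_witness_of_measure_ball_eq_zero (h : (ν : Measure X) (ball x t) = 0) (ht : t ≤ 1) :
    t ≤ witness ν x := by
  rw [witness_eq_sInf]
  refine le_csInf (by exact ⟨1, one_pos, by simp⟩) fun ε ⟨_, hε⟩ => le_of_not_gt fun hεt => ?_
  rw [measure_mono_null (ball_subset_ball hεt.le) h, zero_add, ENNReal.one_le_ofReal] at hε
  linarith

theorem one_le_measure_closedBall_add_of_witness_le (h : witness ν x ≤ t) :
    1 ≤ (ν : Measure X) (closedBall x t) + ENNReal.ofReal t := by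
  have hlim : Tendsto (fun r => (ν : Measure X) (ball x r) + ENNReal.ofReal r) (𝓝[>] t)
      (𝓝 ((ν : Measure X) (closedBall x t) + ENNReal.ofReal t)) := by
    refine Tendsto.add ?_ ((ENNReal.tendsto_ofReal tendsto_id).mono_left nhdsWithin_le_nhds)
    rw [← biInter_gt_ball]
    exact tendsto_measure_biInter_gt (fun _ _ => measurableSet_ball.nullMeasurableSet)
      (fun _ _ _ hij => ball_subset_ball hij) ⟨t + 1, by linarith, measure_ne_top _ _⟩
  exact ge_of_tendsto hlim (eventually_nhdsWithin_of_forall fun r hr =>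
    one_le_measure_ball_add_of_witness_lt (h.trans_lt hr))

theorem measure_ball_add_le_one_of_le_witness (h : t ≤ witness ν x) :
    (ν : Measure X) (ball x t) + ENNReal.ofReal t ≤ 1 := by
  obtain ⟨r, hr_mono, hr_lt, hr_lim⟩ := exists_seq_strictMono_tendsto t
  have hunion : ⋃ n, ball x (r n) = ball x t := by
    refine Subset.antisymm (iUnion_subset fun n => ball_subset_ball (hr_lt n).le) fun y hy => ?_
    obtain ⟨n, hn⟩ := (hr_lim.eventually (lt_mem_nhds (mem_ball.1 hy))).exists
    exact mem_iUnion.2 ⟨n, hn⟩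
  have hlim : Tendsto (fun n => (ν : Measure X) (ball x (r n)) + ENNReal.ofReal (r n)) atTop
      (𝓝 ((ν : Measure X) (ball x t) + ENNReal.ofReal t)) := by
    refine Tendsto.add ?_ (ENNReal.tendsto_ofReal hr_lim)
    rw [← hunion]
    exact tendsto_measure_iUnion_atTop fun m n hmn => ball_subset_ball (hr_mono.monotone hmn)
  exact le_of_tendsto' hlim fun n =>
    (measure_ball_add_lt_one_of_lt_witness ((hr_lt n).trans_le h)).le

theorem witness_le_of_one_le_measure_singleton_add
    (h : 1 ≤ (ν : Measure X) {y} + ENNReal.ofReal t) (hxy : dist x y ≤ t) : witness ν x ≤ t :=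
  witness_le_of_forall_gt fun ε hε =>
    h.trans (by gcongr; exact singleton_subset_iff.2 (mem_ball'.2 (hxy.trans_lt hε)))

theorem witness_eq_zero_iff : witness ν x = 0 ↔ (ν : Measure X) {x} = 1 := by
  refine ⟨fun h => ?_, fun h => le_antisymm ?_ (witness_nonneg ν x)⟩
  · have h1 := one_le_measure_closedBall_add_of_witness_le h.le
    rw [closedBall_zero, ENNReal.ofReal_zero, add_zero] at h1
    exact le_antisymm prob_le_one h1
  · exact witness_le_of_one_le_measure_singleton_add (by simp [h]) (dist_self x).le

theorem one_le_measure_closedBall_add_of_witness_eq (hW : witness μ x = witness ν x)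
    (h : 1 ≤ (μ : Measure X) {y} + ENNReal.ofReal t) (hxy : dist x y ≤ t) :
    1 ≤ (ν : Measure X) (closedBall x t) + ENNReal.ofReal t :=
  one_le_measure_closedBall_add_of_witness_le
    (hW ▸ witness_le_of_one_le_measure_singleton_add h hxy)

theorem measure_ball_one_eq_zero_of_witness_eq (hW : witness μ x = witness ν x)
    (h : (μ : Measure X) (ball x 1) = 0) : (ν : Measure X) (ball x 1) = 0 := by
  have h1 :=
    measure_ball_add_le_one_of_le_witness (hW ▸ le_witness_of_measure_ball_eq_zero h le_rfl)
  rw [ENNReal.ofReal_one] at h1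
  exact nonpos_iff_eq_zero.1
    ((ENNReal.add_le_add_iff_right one_ne_top).1 (h1.trans_eq (zero_add 1).symm))

end Witness

theorem measure_compl_union_eq_zero {Ω : Type*} [MeasurableSpace Ω] {P : Measure Ω}
    [IsProbabilityMeasure P] {A B : Set Ω} (hA : MeasurableSet A) (hB : MeasurableSet B)
    (hAB : Disjoint A B) {a b : ℝ≥0∞} (hPA : 1 ≤ P A + a) (hPB : 1 ≤ P B + b) (hab : a + b = 1) :
    P (A ∪ B)ᶜ = 0 := by
  rw [prob_compl_eq_zero_iff (hA.union hB)]
  refine le_antisymm prob_le_one ?_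
  have h := add_le_add hPA hPB
  rw [add_add_add_comm, hab, ← measure_union hAB hB] at h
  exact (ENNReal.add_le_add_iff_right one_ne_top).1 h

section Geometry

variable {E : Type*} [NormedAddCommGroup E] [NormedSpace ℝ E]

theorem norm_smul_add_smul_of_norm_add_eq {x y : E} (h : ‖x + y‖ = ‖x‖ + ‖y‖) {α β : ℝ}
    (hα : 0 ≤ α) (hβ : 0 ≤ β) : ‖α • x + β • y‖ = α * ‖x‖ + β * ‖y‖ := by
  wlog hβα : β ≤ α generalizing x y α β
  · rw [add_comm, add_comm (α * _)]
    exact this (by rwa [add_comm, add_comm ‖y‖]) hβ hα (le_of_not_ge hβα)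
  refine le_antisymm ((norm_add_le _ _).trans_eq (by
    rw [norm_smul_of_nonneg hα, norm_smul_of_nonneg hβ])) ?_
  have key : α • (x + y) = (α • x + β • y) + (α - β) • y := by module
  have := norm_add_le (α • x + β • y) ((α - β) • y)
  rw [← key, norm_smul_of_nonneg hα, norm_smul_of_nonneg (sub_nonneg.2 hβα), h] at this
  linarith

theorem exists_pos_exists_norm_eq_one_eq_add_smul {p q : E} (h : q ≠ p) :
    ∃ d : ℝ, 0 < d ∧ ∃ u : E, ‖u‖ = 1 ∧ q = p + d • u := by
  have hd : 0 < ‖q - p‖ := norm_pos_iff.2 (sub_ne_zero.2 h)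
  refine ⟨‖q - p‖, hd, ‖q - p‖⁻¹ • (q - p), ?_, ?_⟩
  · rw [norm_smul_of_nonneg (inv_nonneg.2 hd.le), inv_mul_cancel₀ hd.ne']
  · rw [smul_smul, mul_inv_cancel₀ hd.ne', one_smul, add_sub_cancel]

/-- The unit vectors `w` such that the segment `[u, w]` lies on the unit sphere. -/
def unitFace (u : E) : Set E := {w | ‖w‖ = 1 ∧ ‖u + w‖ = 2}

theorem self_mem_unitFace {u : E} (hu : ‖u‖ = 1) : u ∈ unitFace u :=
  ⟨hu, by rw [← two_smul ℝ u, norm_smul_of_nonneg zero_le_two, hu, mul_one]⟩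

theorem disjoint_closedBall_of_mem_unitFace {u w p : E} {a b c : ℝ} (hu : ‖u‖ = 1)
    (hw : w ∈ unitFace u) (ha : 0 ≤ a) (hb : 0 ≤ b) (hbc : b < c) :
    Disjoint (closedBall (p - a • w) a) (closedBall (p + c • u) b) := by
  refine closedBall_disjoint_closedBall ?_
  have hface : ‖u + w‖ = ‖u‖ + ‖w‖ := by rw [hw.1, hw.2, hu]; norm_num
  rw [dist_comm, dist_eq_norm, show p + c • u - (p - a • w) = c • u + a • w by abel,
    norm_smul_add_smul_of_norm_add_eq hface (by linarith) ha, hu, hw.1]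
  linarith

theorem one_le_norm_add_smul {u ζ : E} {a x : ℝ} (hu : ‖u‖ = 1) (ha : a < 1)
    (h_a : ‖ζ + a • u‖ ≤ a) (h_1 : 1 ≤ ‖ζ + u‖) (hx : 0 ≤ x) : 1 ≤ ‖u + x • ζ‖ := by
  rcases le_total x 1 with hx1 | hx1
  · have key : (1 - x * a) • (ζ + u) = (1 - a) • (u + x • ζ) + (1 - x) • (ζ + a • u) := by
      module
    have := norm_add_le ((1 - a) • (u + x • ζ)) ((1 - x) • (ζ + a • u))
    have hxa : 0 ≤ 1 - x * a := by nlinarith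
    rw [← key, norm_smul_of_nonneg hxa, norm_smul_of_nonneg (by linarith),
      norm_smul_of_nonneg (by linarith)] at this
    nlinarith [mul_le_mul_of_nonneg_left h_1 hxa,
      mul_le_mul_of_nonneg_left h_a (sub_nonneg.2 hx1)]
  · have key : x • (ζ + u) = (u + x • ζ) + (x - 1) • u := by module
    have := norm_add_le (u + x • ζ) ((x - 1) • u)
    rw [← key, norm_smul_of_nonneg (by linarith), norm_smul_of_nonneg (by linarith), hu] at this
    nlinarith

theorem exists_nat_norm_add_smul_le_lt (u : E) {ζ : E} (hζ : ζ ≠ 0) :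
    ∃ n : ℕ, ‖u + (n : ℝ) • ζ‖ ≤ ‖u‖ ∧ ‖u‖ < ‖u + ((n : ℝ) + 1) • ζ‖ := by
  have hgrow : ∃ n : ℕ, ‖u‖ < ‖u + (n : ℝ) • ζ‖ := by
    obtain ⟨n, hn⟩ := exists_nat_gt (2 * ‖u‖ / ‖ζ‖)
    refine ⟨n, ?_⟩
    have h1 := norm_sub_norm_le ((n : ℝ) • ζ) (-u)
    rw [sub_neg_eq_add, add_comm, norm_neg, norm_smul_of_nonneg n.cast_nonneg] at h1
    rw [div_lt_iff₀ (norm_pos_iff.2 hζ)] at hn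
    linarith
  obtain ⟨n, hn, hn1⟩ := Nat.exists_not_and_succ_of_not_zero_of_exists (by simp) hgrow
  exact ⟨n, not_lt.1 hn, by exact_mod_cast hn1⟩

/-- Take `w = u + n • (y - p)` for the last `n : ℕ` at which this is still a unit vector; then
`‖w + (y - p)‖ > 1` pushes `y` out of `closedBall (p - a • w) a`. -/
theorem exists_mem_unitFace_notMem_closedBall {u p y : E} {a : ℝ} (hu : ‖u‖ = 1) (ha : a < 1)
    (hy_a : y ∈ closedBall (p - a • u) a) (hy_1 : y ∉ ball (p - u) 1) (hyp : y ≠ p) :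
    ∃ w ∈ unitFace u, y ∉ closedBall (p - a • w) a := by
  have hdist : ∀ (c : ℝ) (v : E), dist y (p - c • v) = ‖(y - p) + c • v‖ := fun c v => by
    rw [dist_eq_norm]; congr 1; abel
  rw [mem_closedBall, hdist] at hy_a
  rw [mem_ball, not_lt, ← one_smul ℝ u, hdist, one_smul] at hy_1
  have hG := fun x (hx : (0 : ℝ) ≤ x) => one_le_norm_add_smul hu ha hy_a hy_1 hx
  obtain ⟨n, hn_le, hn_lt⟩ := exists_nat_norm_add_smul_le_lt u (sub_ne_zero.2 hyp)
  set w := u + (n : ℝ) • (y - p)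
  have hw : ‖w‖ = 1 := le_antisymm (hn_le.trans hu.le) (hG n n.cast_nonneg)
  have huw : ‖u + w‖ = 2 := by
    refine le_antisymm ((norm_add_le u w).trans (by rw [hu, hw]; norm_num)) ?_
    have : u + w = (2 : ℝ) • (u + ((n : ℝ) / 2) • (y - p)) := by simp only [w]; module
    rw [this, norm_smul_of_nonneg zero_le_two]
    linarith [hG (n / 2) (by positivity)]
  refine ⟨w, ⟨hw, huw⟩, ?_⟩
  rw [mem_closedBall, hdist, not_le]
  have key : w + (y - p) = (1 - a) • w + ((y - p) + a • w) := by module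
  have := norm_add_le ((1 - a) • w) ((y - p) + a • w)
  rw [← key, norm_smul_of_nonneg (by linarith), hw,
    show w + (y - p) = u + ((n : ℝ) + 1) • (y - p) by simp only [w]; module] at this
  linarith

end Geometry

section TwoPoint

variable {X : Type*} [NormedAddCommGroup X] [NormedSpace ℝ X] [SeparableSpace X]
  [MeasurableSpace X] [BorelSpace X]

theorem measure_closedBall_le_measure_singleton {ν : ProbabilityMeasure X} {p u : X}
    {a b c : ℝ} (hu : ‖u‖ = 1) (ha : 0 ≤ a) (ha1 : a < 1) (hb : 0 ≤ b) (hbc : b < c)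
    (hab : ENNReal.ofReal a + ENNReal.ofReal b = 1)
    (hC : ∀ w ∈ unitFace u, 1 ≤ (ν : Measure X) (closedBall (p - a • w) a) + ENNReal.ofReal a)
    (hB : 1 ≤ (ν : Measure X) (closedBall (p + c • u) b) + ENNReal.ofReal b)
    (hN : (ν : Measure X) (ball (p - u) 1) = 0) :
    (ν : Measure X) (closedBall (p - a • u) a) ≤ (ν : Measure X) {p} := by
  have hnull : ∀ w ∈ unitFace u,
      (closedBall (p - a • w) a ∪ closedBall (p + c • u) b)ᶜ ⊆ (ν : Measure X).supportᶜ :=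
    fun w hw => Measure.subset_compl_support_of_isOpen
      (isClosed_closedBall.union isClosed_closedBall).isOpen_compl
      (measure_compl_union_eq_zero measurableSet_closedBall measurableSet_closedBall
        (disjoint_closedBall_of_mem_unitFace hu hw ha hb hbc) (hC w hw) hB hab)
  have hcover : closedBall (p - a • u) a ⊆ {p} ∪ ball (p - u) 1 ∪ (ν : Measure X).supportᶜ := by
    intro y hy
    by_cases hyp : y = p
    · exact Or.inl (Or.inl hyp)
    by_cases hy1 : y ∈ ball (p - u) 1
    · exact Or.inl (Or.inr hy1)
    obtain ⟨w, hw, hyw⟩ := exists_mem_unitFace_notMem_closedBall hu ha1 hy hy1 hyp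
    refine Or.inr (hnull w hw (not_or.2 ⟨hyw, disjoint_left.1 ?_ hy⟩))
    exact disjoint_closedBall_of_mem_unitFace hu (self_mem_unitFace hu) ha hb hbc
  calc (ν : Measure X) (closedBall (p - a • u) a)
      ≤ (ν : Measure X) {p} + (ν : Measure X) (ball (p - u) 1) +
        (ν : Measure X) (ν : Measure X).supportᶜ :=
      (measure_mono hcover).trans
        ((measure_union_le _ _).trans (by gcongr; exact measure_union_le _ _))
    _ = (ν : Measure X) {p} := by rw [hN, Measure.measure_compl_support, add_zero, add_zero]

theorem measure_singleton_le_of_witness_eq {μ ν : ProbabilityMeasure X} {p q : X}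
    (hμ : (μ : Measure X) {p, q} = 1) (hW : ∀ x, witness μ x = witness ν x) :
    (μ : Measure X) {p} ≤ (ν : Measure X) {p} := by
  rcases eq_or_ne q p with rfl | hqp
  · rw [pair_eq_singleton] at hμ
    rw [hμ, witness_eq_zero_iff.1 ((hW q).symm.trans (witness_eq_zero_iff.2 hμ))]
  rcases eq_or_ne ((μ : Measure X) {p}) 0 with hp0 | hp0
  · simp [hp0]
  set a := ((μ : Measure X) {q}).toReal
  set b := ((μ : Measure X) {p}).toReal
  have ha : 0 ≤ a := toReal_nonneg
  have hb : 0 ≤ b := toReal_nonneg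
  have hμq : (μ : Measure X) {q} = ENNReal.ofReal a := (ofReal_toReal (measure_ne_top _ _)).symm
  have hμp : (μ : Measure X) {p} = ENNReal.ofReal b := (ofReal_toReal (measure_ne_top _ _)).symm
  have hab : ENNReal.ofReal a + ENNReal.ofReal b = 1 := by
    rw [← hμq, ← hμp, add_comm, ← measure_union (disjoint_singleton.2 hqp.symm)
      (measurableSet_singleton q), ← hμ, union_singleton, pair_comm]
  have ha1 : a < 1 := by
    have hb_pos : 0 < b := ENNReal.toReal_pos hp0 (measure_ne_top _ _)
    rw [← ENNReal.ofReal_add ha hb, ENNReal.ofReal_eq_one] at hab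
    linarith
  obtain ⟨d, hd, u, hu, hq⟩ := exists_pos_exists_norm_eq_one_eq_add_smul hqp
  have hμN : (μ : Measure X) (ball (p - u) 1) = 0 := by
    refine measure_mono_null ?_
      ((prob_compl_eq_zero_iff ((measurableSet_singleton q).insert p)).2 hμ)
    rintro y hy (rfl | rfl)
    · simp [hu] at hy
    · rw [mem_ball, hq, dist_eq_norm, show p + d • u - (p - u) = (d + 1) • u by module,
        norm_smul_of_nonneg (by positivity), hu] at hy
      linarith
  have hC : ∀ w, ‖w‖ = 1 →
      1 ≤ (ν : Measure X) (closedBall (p - a • w) a) + ENNReal.ofReal a := fun w hw =>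
    one_le_measure_closedBall_add_of_witness_eq (hW _) (by rw [hμp, add_comm, hab])
      (by rw [dist_self_sub_left, norm_smul_of_nonneg ha, hw, mul_one])
  have hB := one_le_measure_closedBall_add_of_witness_eq (hW (q + b • u)) (by rw [hμq, hab])
    (by rw [dist_self_add_left, norm_smul_of_nonneg hb, hu, mul_one])
  rw [hq, add_assoc, ← add_smul] at hB
  calc (μ : Measure X) {p} = ENNReal.ofReal b := hμp
    _ ≤ (ν : Measure X) (closedBall (p - a • u) a) :=
      (ENNReal.add_le_add_iff_right ofReal_ne_top).1 (by rw [add_comm, hab]; exact hC u hu)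
    _ ≤ (ν : Measure X) {p} :=
      measure_closedBall_le_measure_singleton hu ha ha1 hb (by linarith) hab
        (fun w hw => hC w hw.1) hB (measure_ball_one_eq_zero_of_witness_eq (hW _) hμN)

end TwoPoint

theorem Finset.exists_subset_pair_of_card_le_two {α : Type*} [DecidableEq α] {s : Finset α}
    {x : α} (hx : x ∈ s) (hs : s.card ≤ 2) : ∃ y, s ⊆ {x, y} := by
  have : Nonempty α := ⟨x⟩
  have : (s.erase x).card ≤ 1 := by rw [Finset.card_erase_of_mem hx]; omega
  obtain ⟨y, hy⟩ := Finset.card_le_one_iff_subset_singleton.1 this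
  exact ⟨y, (Finset.insert_erase hx).symm.subset.trans (Finset.insert_subset_insert x hy)⟩

theorem MeasureTheory.Measure.le_of_measure_singleton_le {α : Type*} [MeasurableSpace α]
    [MeasurableSingletonClass α] {μ ν : Measure α} {s : Finset α} (hs : μ (↑s)ᶜ = 0)
    (h : ∀ x ∈ s, μ {x} ≤ ν {x}) : μ ≤ ν := by
  classical
  intro A
  calc μ A = μ ↑(s.filter (· ∈ A)) := by
        rw [Finset.coe_filter, ← measure_inter_conull (t := ↑s) hs]; congr 1; ext; simp [and_comm]
    _ = ∑ x ∈ s.filter (· ∈ A), μ {x} := (sum_measure_singleton).symm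
    _ ≤ ∑ x ∈ s.filter (· ∈ A), ν {x} :=
      Finset.sum_le_sum fun x hx => h x (Finset.mem_filter.1 hx).1
    _ = ν ↑(s.filter (· ∈ A)) := sum_measure_singleton
    _ ≤ ν A := measure_mono fun x hx => (Finset.mem_filter.1 hx).2

theorem IsFinitelySupported.exists_finset {X : Type*} [MeasurableSpace X]
    [MeasurableSingletonClass X] {μ : ProbabilityMeasure X} (hμ : IsFinitelySupported μ) :
    ∃ s : Finset X, (μ : Measure X) (↑s)ᶜ = 0 ∧ ∀ x ∈ s, 0 < (μ : Measure X) {x} := by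
  obtain ⟨s, w, hw, -, hrep⟩ := hμ
  refine ⟨s, ?_, fun x hx => ?_⟩
  · rw [hrep, Measure.finsetSum_apply]
    exact Finset.sum_eq_zero fun y hy => by simp [hy]
  · rw [hrep, Measure.finsetSum_apply]
    refine lt_of_lt_of_le ?_ (Finset.single_le_sum (fun y _ => zero_le) hx)
    simpa using hw x hx

theorem mem_mSupport_of_measure_singleton_pos {X : Type*} [MetricSpace X] [MeasurableSpace X]
    {μ : ProbabilityMeasure X} {x : X} (h : 0 < (μ : Measure X) {x}) : x ∈ mSupport μ :=
  fun _ hr => h.trans_le (measure_mono (singleton_subset_iff.2 (mem_ball_self hr)))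

theorem witness_determines_two_point_general {X : Type*} [NormedAddCommGroup X] [NormedSpace ℝ X]
    [SeparableSpace X] [MeasurableSpace X] [BorelSpace X]
    (μ : ProbabilityMeasure X) (hμ : IsFinitelySupported μ)
    (hcard : (mSupport μ).encard ≤ 2)
    (ν : ProbabilityMeasure X)
    (hW : ∀ x : X, witness μ x = witness ν x) :
    μ = ν := by
  classical
  obtain ⟨s, hs, hpos⟩ := hμ.exists_finset
  have hs2 : s.card ≤ 2 := by
    have := (Set.encard_le_encard fun x hx =>
      mem_mSupport_of_measure_singleton_pos (hpos x hx)).trans hcard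
    rwa [Set.encard_coe_eq_coe_finsetCard, Nat.cast_le_ofNat] at this
  refine ProbabilityMeasure.toMeasure_injective <| Measure.eq_of_le_of_isProbabilityMeasure <|
    Measure.le_of_measure_singleton_le hs fun x hx => ?_
  obtain ⟨y, hy⟩ := Finset.exists_subset_pair_of_card_le_two hx hs2
  refine measure_singleton_le_of_witness_eq (q := y) (le_antisymm prob_le_one ?_) hW
  rw [← (prob_compl_eq_zero_iff s.measurableSet).1 hs]
  exact measure_mono (by rw [← Finset.coe_pair]; exact Finset.coe_subset.2 hy)

/-- Corollary 3.3 (second part): a finitely supported measure with at most two points in its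
support is determined by its witness function. -/
theorem witness_determines_two_point {X : Type*} [NormedAddCommGroup X] [NormedSpace ℝ X]
    [CompleteSpace X] [SeparableSpace X] [MeasurableSpace X] [BorelSpace X]
    (μ : ProbabilityMeasure X) (hμ : IsFinitelySupported μ)
    (hcard : (mSupport μ).encard ≤ 2)
    (ν : ProbabilityMeasure X)
    (hW : ∀ x : X, witness μ x = witness ν x) :
    μ = ν :=
  witness_determines_two_point_general μ hμ hcard ν hW
end
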